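/- arXiv:2308.11416 — 9 statements merged into one kernel-verified Lean document; each statement's English description precedes it below -/
import Mathlib

section
/- Let n, m ≥ 1 and, for each j ∈ {1,…,m}, let a clause be given by sets P_j, N_j ⊆ {1,…,n} (the indices of its positive and negative literals). Let V = {t, f, x_1, …, x_n} consist of n+2 pairwise distinct vertices, let E_+ = {{t, f}}, and for each j ∈ {1,…,m} let E_j = {{t, x_i} : i ∈ P_j} ∪ {{f, x_i} : i ∈ N_j}. Then there exists an assignment A : {1,…,n} → {true, false} satisfying every clause (i.e., for each j ∈ {1,…,m}, either A(i) = true for some i ∈ P_j, or A(i) = false for some i ∈ N_j) if and only if there exists X ⊆ V such that (X, V \ X) is a proper 2-coloring of (V, E_+) and, for every j ∈ {1,…,m}, (X, V \ X) is not a proper 2-coloring of (V, E_j). -/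
/-- `X` is independent in the graph with edge set `E`: no edge has both endpoints in `X`. -/
def Indep {α : Type*} (E : Set (Sym2 α)) (X : Set α) : Prop :=
  ∀ u v : α, s(u, v) ∈ E → ¬(u ∈ X ∧ v ∈ X)

/-- `(X, V \ X)` is a proper 2-coloring of the graph `(V, E)`:
both `X` and `V \ X` are independent in `(V, E)`. -/
def Proper2Col {α : Type*} (V : Set α) (E : Set (Sym2 α)) (X : Set α) : Prop :=
  Indep E X ∧ Indep E (V \ X)

theorem stmt0 {α : Type*} (n m : ℕ) (hn : 1 ≤ n) (hm : 1 ≤ m)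
    (P N : Fin m → Set (Fin n))
    (t f : α) (x : Fin n → α)
    (htf : t ≠ f) (hxt : ∀ i, x i ≠ t) (hxf : ∀ i, x i ≠ f)
    (hx : Function.Injective x)
    (V : Set α) (hV : V = {t, f} ∪ Set.range x)
    (Eplus : Set (Sym2 α)) (hEplus : Eplus = {s(t, f)})
    (EC : Fin m → Set (Sym2 α))
    (hEC : ∀ j, EC j =
      {e | ∃ i ∈ P j, e = s(t, x i)} ∪ {e | ∃ i ∈ N j, e = s(f, x i)}) :
    (∃ A : Fin n → Bool,
        ∀ j : Fin m, (∃ i ∈ P j, A i = true) ∨ (∃ i ∈ N j, A i = false)) ↔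
      (∃ X ⊆ V, Proper2Col V Eplus X ∧ ∀ j : Fin m, ¬ Proper2Col V (EC j) X) := by
  classical
  subst hV hEplus
  constructor
  · rintro ⟨A, hA⟩
    set X : Set α := {t} ∪ {a | ∃ i, A i = true ∧ a = x i} with hXdef
    have htX : t ∈ X := Or.inl rfl
    have hfX : f ∉ X := by
      rintro (h | ⟨i, _, h⟩)
      · exact htf h.symm
      · exact hxf i h.symm
    refine ⟨X, ?_, ⟨?_, ?_⟩, ?_⟩
    · rintro a (rfl | ⟨i, _, rfl⟩)
      · exact Or.inl (Or.inl rfl)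
      · exact Or.inr ⟨i, rfl⟩
    · intro u v huv hmem
      simp only [Set.mem_singleton_iff, Sym2.eq, Sym2.rel_iff', Prod.mk.injEq,
        Prod.swap_prod_mk] at huv
      rcases huv with ⟨rfl, rfl⟩ | ⟨rfl, rfl⟩
      · exact hfX hmem.2
      · exact hfX hmem.1
    · intro u v huv hmem
      simp only [Set.mem_singleton_iff, Sym2.eq, Sym2.rel_iff', Prod.mk.injEq,
        Prod.swap_prod_mk] at huv
      rcases huv with ⟨rfl, rfl⟩ | ⟨rfl, rfl⟩
      · exact hmem.1.2 htX
      · exact hmem.2.2 htX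
    · intro j hcol
      rw [hEC j] at hcol
      rcases hA j with ⟨i, hiP, hAi⟩ | ⟨i, hiN, hAi⟩
      · exact hcol.1 t (x i) (Or.inl ⟨i, hiP, rfl⟩) ⟨htX, Or.inr ⟨i, hAi, rfl⟩⟩
      · have hxiX : x i ∉ X := by
          rintro (h | ⟨i', hAi', h⟩)
          · exact hxt i h
          · rw [hx h] at hAi
            rw [hAi'] at hAi
            exact Bool.true_eq_false.mp hAi
        exact hcol.2 f (x i) (Or.inr ⟨i, hiN, rfl⟩)
          ⟨⟨Or.inl (Or.inr rfl), hfX⟩, ⟨Or.inr ⟨i, rfl⟩, hxiX⟩⟩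
  · rintro ⟨X, hXV, ⟨h1, h2⟩, hj⟩
    have htm : t ∈ ({t, f} ∪ Set.range x : Set α) := Or.inl (Or.inl rfl)
    have hfm : f ∈ ({t, f} ∪ Set.range x : Set α) := Or.inl (Or.inr rfl)
    have hnotboth : ¬(t ∈ X ∧ f ∈ X) := h1 t f rfl
    have hor : t ∈ X ∨ f ∈ X := by
      by_contra h
      push_neg at h
      exact h2 t f rfl ⟨⟨htm, h.1⟩, ⟨hfm, h.2⟩⟩
    have key : ∀ j, ∃ u v, s(u, v) ∈ EC j ∧
        ((u ∈ X ∧ v ∈ X) ∨ (u ∈ ({t, f} ∪ Set.range x : Set α) \ X ∧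
          v ∈ ({t, f} ∪ Set.range x : Set α) \ X)) := by
      intro j
      have := hj j
      rw [Proper2Col, not_and_or] at this
      rcases this with h | h
      · simp only [Indep, not_forall, not_not] at h
        obtain ⟨u, v, huv, hm⟩ := h
        exact ⟨u, v, huv, Or.inl hm⟩
      · simp only [Indep, not_forall, not_not] at h
        obtain ⟨u, v, huv, hm⟩ := h
        exact ⟨u, v, huv, Or.inr hm⟩
    rcases hor with htX | hfX
    · have hfX : f ∉ X := fun h => hnotboth ⟨htX, h⟩
      refine ⟨fun i => decide (x i ∈ X), fun j => ?_⟩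
      obtain ⟨u, v, huv, hm⟩ := key j
      rw [hEC j] at huv
      rcases huv with ⟨i, hiP, heq⟩ | ⟨i, hiN, heq⟩ <;>
        simp only [Sym2.eq, Sym2.rel_iff', Prod.mk.injEq, Prod.swap_prod_mk] at heq
      · rcases heq with ⟨rfl, rfl⟩ | ⟨rfl, rfl⟩
        · rcases hm with ⟨_, hv⟩ | ⟨⟨_, ht'⟩, _⟩
          · exact Or.inl ⟨i, hiP, by simp [hv]⟩
          · exact absurd htX ht'
        · rcases hm with ⟨hu, _⟩ | ⟨_, ⟨_, ht'⟩⟩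
          · exact Or.inl ⟨i, hiP, by simp [hu]⟩
          · exact absurd htX ht'
      · rcases heq with ⟨rfl, rfl⟩ | ⟨rfl, rfl⟩
        · rcases hm with ⟨hf', _⟩ | ⟨_, ⟨_, hv⟩⟩
          · exact absurd hf' hfX
          · exact Or.inr ⟨i, hiN, by simp [hv]⟩
        · rcases hm with ⟨_, hf'⟩ | ⟨⟨_, hu⟩, _⟩
          · exact absurd hf' hfX
          · exact Or.inr ⟨i, hiN, by simp [hu]⟩
    · have htX : t ∉ X := fun h => hnotboth ⟨h, hfX⟩
      refine ⟨fun i => decide (x i ∉ X), fun j => ?_⟩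
      obtain ⟨u, v, huv, hm⟩ := key j
      rw [hEC j] at huv
      rcases huv with ⟨i, hiP, heq⟩ | ⟨i, hiN, heq⟩ <;>
        simp only [Sym2.eq, Sym2.rel_iff', Prod.mk.injEq, Prod.swap_prod_mk] at heq
      · rcases heq with ⟨rfl, rfl⟩ | ⟨rfl, rfl⟩
        · rcases hm with ⟨ht', _⟩ | ⟨_, ⟨_, hv⟩⟩
          · exact absurd ht' htX
          · exact Or.inl ⟨i, hiP, by simp [hv]⟩
        · rcases hm with ⟨_, ht'⟩ | ⟨⟨_, hu⟩, _⟩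
          · exact absurd ht' htX
          · exact Or.inl ⟨i, hiP, by simp [hu]⟩
      · rcases heq with ⟨rfl, rfl⟩ | ⟨rfl, rfl⟩
        · rcases hm with ⟨_, hv⟩ | ⟨⟨_, hf'⟩, _⟩
          · exact Or.inr ⟨i, hiN, by simp [hv]⟩
          · exact absurd hfX hf'
        · rcases hm with ⟨hu, _⟩ | ⟨_, ⟨_, hf'⟩⟩
          · exact Or.inr ⟨i, hiN, by simp [hu]⟩
          · exact absurd hfX hf'
end

section
/- Let (V, E) be a finite simple graph. If (X_1, V \ X_1) and (X_2, V \ X_2) are both splits of (V, E), then |X_1 \ X_2| ≤ 1 and |X_2 \ X_1| ≤ 1; that is, any split of a graph can be obtained from any other split by moving at most one vertex from the clique part to the independent part and at most one vertex from the independent part to the clique part. -/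
/-- `X` is a clique in the graph with edge set `E`: every pair of distinct
elements of `X` is an edge. -/
def IsCliqueIn {α : Type*} (E : Set (Sym2 α)) (X : Set α) : Prop :=
  ∀ u ∈ X, ∀ v ∈ X, u ≠ v → s(u, v) ∈ E

/-- `(X, V \ X)` is a split of `(V, E)`: `X ⊆ V` is a clique and `V \ X` is independent. -/
def IsSplit {α : Type*} (V : Set α) (E : Set (Sym2 α)) (X : Set α) : Prop :=
  X ⊆ V ∧ IsCliqueIn E X ∧ Indep E (V \ X)

lemma aux_split {α : Type*} [DecidableEq α] (V : Finset α) (E : Set (Sym2 α))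
    (X₁ X₂ : Finset α)
    (hX₁ : IsSplit (↑V) E (↑X₁)) (hX₂ : IsSplit (↑V) E (↑X₂)) :
    (X₁ \ X₂).card ≤ 1 := by
  rw [Finset.card_le_one]
  intro u hu v hv
  simp only [Finset.mem_sdiff] at hu hv
  by_contra hne
  have he : s(u, v) ∈ E := hX₁.2.1 u hu.1 v hv.1 hne
  exact hX₂.2.2 u v he ⟨⟨hX₁.1 hu.1, hu.2⟩, ⟨hX₁.1 hv.1, hv.2⟩⟩

theorem stmt1 {α : Type*} [DecidableEq α] (V : Finset α) (E : Set (Sym2 α))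
    (hE : ∀ e ∈ E, ¬ e.IsDiag)
    (X₁ X₂ : Finset α)
    (hX₁ : IsSplit (↑V) E (↑X₁)) (hX₂ : IsSplit (↑V) E (↑X₂)) :
    (X₁ \ X₂).card ≤ 1 ∧ (X₂ \ X₁).card ≤ 1 :=
  ⟨aux_split V E X₁ X₂ hX₁ hX₂, aux_split V E X₂ X₁ hX₂ hX₁⟩
end

section
/- Let (V, E) be a finite simple graph with |V| = n. Then the number of subsets X ⊆ V such that (X, V \ X) is a split of (V, E) is at most (n + 1)^2. -/
/-- A set that is both a clique and independent has at most one element. -/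
lemma card_le_one_of_clique_indep {α : Type*} {E : Set (Sym2 α)} {S : Finset α}
    (hclq : IsCliqueIn E (↑S)) (hind : Indep E (↑S)) : S.card ≤ 1 := by
  rw [Finset.card_le_one]
  intro a ha b hb
  by_contra hab
  exact hind a b (hclq a ha b hb hab) ⟨ha, hb⟩

lemma card_small_subsets {α : Type*} [DecidableEq α] (S : Finset α) :
    (S.powerset.filter fun A => A.card ≤ 1).card ≤ S.card + 1 := by
  have hsub : (S.powerset.filter fun A => A.card ≤ 1) ⊆
      insert ∅ (S.image fun a => ({a} : Finset α)) := by
    intro A hA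
    simp only [Finset.mem_filter, Finset.mem_powerset] at hA
    obtain ⟨hAS, hA1⟩ := hA
    rcases A.eq_empty_or_nonempty with rfl | ⟨a, ha⟩
    · exact Finset.mem_insert_self _ _
    · have hA : A = {a} := by
        apply Finset.eq_singleton_iff_unique_mem.mpr
        exact ⟨ha, fun b hb => Finset.card_le_one.mp hA1 b hb a ha⟩
      refine Finset.mem_insert_of_mem ?_
      exact Finset.mem_image.mpr ⟨a, hAS ha, hA.symm⟩
  calc (S.powerset.filter fun A => A.card ≤ 1).card
      ≤ (insert ∅ (S.image fun a => ({a} : Finset α))).card := Finset.card_le_card hsub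
    _ ≤ (S.image fun a => ({a} : Finset α)).card + 1 := Finset.card_insert_le _ _
    _ ≤ S.card + 1 := by
        exact Nat.add_le_add_right (Finset.card_image_le) 1

theorem stmt2 {α : Type*} [DecidableEq α] (V : Finset α) (E : Set (Sym2 α))
    (hE : ∀ e ∈ E, ¬ e.IsDiag) (n : ℕ) (hn : V.card = n) :
    {X : Finset α | IsSplit (↑V) E (↑X)}.ncard ≤ (n + 1) ^ 2 := by
  set S := {X : Finset α | IsSplit (↑V) E (↑X)} with hSdef
  rcases Set.eq_empty_or_nonempty S with hS | ⟨X₀, hX₀⟩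
  · simp [hS]
  obtain ⟨hX₀V, hX₀clq, hX₀ind⟩ := hX₀
  have hX₀V' : X₀ ⊆ V := by exact_mod_cast hX₀V
  set T : Finset (Finset α × Finset α) :=
    (X₀.powerset.filter fun A => A.card ≤ 1) ×ˢ
      ((V \ X₀).powerset.filter fun B => B.card ≤ 1) with hTdef
  have hmaps : ∀ Y ∈ S, (X₀ \ Y, Y \ X₀) ∈ (↑T : Set (Finset α × Finset α)) := by
    intro Y hY
    obtain ⟨hYV, hYclq, hYind⟩ := hY
    have hYV' : Y ⊆ V := by exact_mod_cast hYV
    simp only [hTdef, Finset.coe_mem, Finset.mem_coe, Finset.mem_product,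
      Finset.mem_filter, Finset.mem_powerset]
    refine ⟨⟨Finset.sdiff_subset, ?_⟩, ⟨Finset.sdiff_subset_sdiff hYV' (le_refl _), ?_⟩⟩
    · refine card_le_one_of_clique_indep (E := E) ?_ ?_
      · intro u hu v hv huv
        simp only [Finset.coe_sdiff, Set.mem_diff, Finset.mem_coe] at hu hv
        exact hX₀clq u hu.1 v hv.1 huv
      · intro u v he ⟨hu, hv⟩
        simp only [Finset.coe_sdiff, Set.mem_diff, Finset.mem_coe] at hu hv
        exact hYind u v he ⟨⟨hX₀V hu.1, hu.2⟩, ⟨hX₀V hv.1, hv.2⟩⟩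
    · refine card_le_one_of_clique_indep (E := E) ?_ ?_
      · intro u hu v hv huv
        simp only [Finset.coe_sdiff, Set.mem_diff, Finset.mem_coe] at hu hv
        exact hYclq u hu.1 v hv.1 huv
      · intro u v he ⟨hu, hv⟩
        simp only [Finset.coe_sdiff, Set.mem_diff, Finset.mem_coe] at hu hv
        exact hX₀ind u v he ⟨⟨hYV hu.1, hu.2⟩, ⟨hYV hv.1, hv.2⟩⟩
  have hinj : Set.InjOn (fun Y => (X₀ \ Y, Y \ X₀)) S := by
    intro Y₁ h₁ Y₂ h₂ h
    simp only [Prod.mk.injEq] at h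
    obtain ⟨h1, h2⟩ := h
    ext a
    by_cases hax : a ∈ X₀
    · have := Finset.ext_iff.mp h1 a
      simp only [Finset.mem_sdiff, hax, true_and] at this
      tauto
    · have := Finset.ext_iff.mp h2 a
      simp only [Finset.mem_sdiff, hax, and_true] at this
      tauto
  have hle : S.ncard ≤ (↑T : Set (Finset α × Finset α)).ncard :=
    Set.ncard_le_ncard_of_injOn _ hmaps hinj T.finite_toSet
  rw [Set.ncard_coe_finset] at hle
  refine hle.trans ?_
  rw [hTdef, Finset.card_product]
  have h1 : (X₀.powerset.filter fun A => A.card ≤ 1).card ≤ n + 1 :=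
    (card_small_subsets X₀).trans (by
      have := Finset.card_le_card hX₀V'
      omega)
  have h2 : ((V \ X₀).powerset.filter fun B => B.card ≤ 1).card ≤ n + 1 :=
    (card_small_subsets _).trans (by
      have := Finset.card_le_card (Finset.sdiff_subset (s := V) (t := X₀))
      omega)
  calc _ ≤ (n+1) * (n+1) := Nat.mul_le_mul h1 h2
    _ = (n+1)^2 := (sq (n+1)).symm
end

section
/- Let n, m, k ≥ 1 and let F_1, …, F_m ⊆ {1,…,n}. Let V consist of pairwise distinct vertices s_1, …, s_k (star centers) and p_{i,ℓ} for i ∈ {1,…,k}, ℓ ∈ {1,…,m} (star leaves). Let E_1 = {{s_i, p_{i,ℓ}} : i ∈ {1,…,k}, ℓ ∈ {1,…,m}}, and for each j ∈ {1,…,n} let N_j be the set of all unordered pairs of distinct vertices of V except the pairs {s_i, p_{i,ℓ}} with i ∈ {1,…,k} and j ∈ F_ℓ. Then there exists a map α : {1,…,k} → {1,…,m} with ⋃_{i=1}^{k} F_{α(i)} = {1,…,n} if and only if there exists a set Q of exactly k unordered pairs of distinct vertices of V such that Q is a matching in (V, E_1) and, for every j ∈ {1,…,n}, Q is not a matching in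 (V, N_j). -/
/-- `M` is a matching in the graph with edge set `E`:
`M ⊆ E` and the pairs in `M` are pairwise disjoint. -/
def IsMatchingIn {α : Type*} (E M : Set (Sym2 α)) : Prop :=
  M ⊆ E ∧ ∀ e₁ ∈ M, ∀ e₂ ∈ M, e₁ ≠ e₂ → ∀ v : α, v ∈ e₁ → v ∉ e₂

theorem stmt4 {α : Type*} (n m k : ℕ) (hn : 1 ≤ n) (hm : 1 ≤ m) (hk : 1 ≤ k)
    (F : Fin m → Set (Fin n))
    (st : Fin k → α) (p : Fin k → Fin m → α)
    (hst : Function.Injective st)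
    (hp : ∀ i ℓ i' ℓ', p i ℓ = p i' ℓ' → i = i' ∧ ℓ = ℓ')
    (hsp : ∀ i i' ℓ, st i ≠ p i' ℓ)
    (V : Set α) (hV : V = Set.range st ∪ {v | ∃ i ℓ, v = p i ℓ})
    (E₁ : Set (Sym2 α)) (hE₁ : E₁ = {e | ∃ i ℓ, e = s(st i, p i ℓ)})
    (N : Fin n → Set (Sym2 α))
    (hN : ∀ j, N j = {e | ¬ e.IsDiag ∧ ∀ v ∈ e, v ∈ V} \
      {e | ∃ i ℓ, j ∈ F ℓ ∧ e = s(st i, p i ℓ)}) :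
    (∃ a : Fin k → Fin m, (⋃ i, F (a i)) = Set.univ) ↔
      (∃ Q : Set (Sym2 α), Q.ncard = k ∧ (∀ e ∈ Q, ¬ e.IsDiag ∧ ∀ v ∈ e, v ∈ V) ∧
        IsMatchingIn E₁ Q ∧ ∀ j : Fin n, ¬ IsMatchingIn (N j) Q) := by
  classical
  -- key uniqueness lemma for edges
  have key : ∀ i ℓ i' ℓ', s(st i, p i ℓ) = s(st i' , p i' ℓ') → i = i' ∧ ℓ = ℓ' := by
    intro i ℓ i' ℓ' h
    rw [Sym2.eq_iff] at h
    rcases h with ⟨h1, h2⟩ | ⟨h1, h2⟩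
    · exact ⟨hst h1, ((hp _ _ _ _ h2).2)⟩
    · exact absurd h1 (hsp i i' ℓ')
  constructor
  · rintro ⟨a, ha⟩
    refine ⟨Set.range (fun i : Fin k => s(st i, p i (a i))), ?_, ?_, ⟨?_, ?_⟩, ?_⟩
    · have hinj : Function.Injective (fun i : Fin k => s(st i, p i (a i))) := by
        intro i i' h
        exact (key _ _ _ _ h).1
      rw [← Nat.card_coe_set_eq, Nat.card_range_of_injective hinj,
        Nat.card_eq_fintype_card, Fintype.card_fin]
    · rintro e ⟨i, rfl⟩
      constructor
      · simp only [Sym2.isDiag_iff_proj_eq]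
        exact hsp i i (a i)
      · intro v hv
        rw [Sym2.mem_iff] at hv
        rw [hV]
        rcases hv with rfl | rfl
        · exact Or.inl ⟨i, rfl⟩
        · exact Or.inr ⟨i, a i, rfl⟩
    · rintro e ⟨i, rfl⟩
      rw [hE₁]
      exact ⟨i, a i, rfl⟩
    · rintro e₁ ⟨i, rfl⟩ e₂ ⟨i', rfl⟩ hne v hv1 hv2
      have hii' : i ≠ i' := fun h => hne (by rw [h])
      rw [Sym2.mem_iff] at hv1 hv2
      rcases hv1 with rfl | h1 <;> rcases hv2 with h2 | h2
      · exact hii' (hst h2)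
      · exact hsp i i' (a i') h2
      · exact hsp i' i (a i) (h2.symm.trans h1)
      · exact hii' (hp _ _ _ _ (h1.symm.trans h2)).1
    · intro j hmatch
      have hj : j ∈ ⋃ i, F (a i) := ha ▸ Set.mem_univ j
      rw [Set.mem_iUnion] at hj
      obtain ⟨i, hji⟩ := hj
      have hin : s(st i, p i (a i)) ∈ N j := hmatch.1 ⟨i, rfl⟩
      rw [hN j] at hin
      exact hin.2 ⟨i, a i, hji, rfl⟩
  · rintro ⟨Q, hcard, hgood, ⟨hsub, hdisj⟩, hnot⟩
    have hQfin : Q.Finite := by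
      by_contra h
      rw [Set.Infinite.ncard h] at hcard
      omega
    have hmem : ∀ e ∈ Q, ∃ i ℓ, e = s(st i, p i ℓ) := by
      intro e he
      have := hsub he
      rwa [hE₁] at this
    choose I L hIL using hmem
    have := hQfin.to_subtype
    set f : Q → Fin k := fun e => I e.1 e.2 with hf
    have hfinj : Function.Injective f := by
      rintro ⟨e₁, h1⟩ ⟨e₂, h2⟩ heq
      simp only [hf] at heq
      by_contra hne
      have hne' : e₁ ≠ e₂ := fun h => hne (Subtype.ext h)
      have hmem1 : st (I e₁ h1) ∈ e₁ := by
        have h := Sym2.mem_mk_left (st (I e₁ h1)) (p (I e₁ h1) (L e₁ h1))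
        rwa [← hIL e₁ h1] at h
      have hmem2 : st (I e₁ h1) ∈ e₂ := by
        have h := Sym2.mem_mk_left (st (I e₂ h2)) (p (I e₂ h2) (L e₂ h2))
        rw [← hIL e₂ h2] at h
        rwa [heq]
      exact hdisj e₁ h1 e₂ h2 hne' _ hmem1 hmem2
    have hfbij : Function.Bijective f := by
      rw [Nat.bijective_iff_injective_and_card]
      refine ⟨hfinj, ?_⟩
      rw [Nat.card_coe_set_eq, hcard, Nat.card_eq_fintype_card, Fintype.card_fin]
    set g := Function.surjInv hfbij.2 with hg
    refine ⟨fun i => L (g i).1 (g i).2, ?_⟩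
    ext j
    simp only [Set.mem_iUnion, Set.mem_univ, iff_true]
    -- Q is not a matching in N j; disjointness always holds, so ¬ Q ⊆ N j
    have hns : ¬ Q ⊆ N j := by
      intro hs
      exact hnot j ⟨hs, hdisj⟩
    rw [Set.not_subset] at hns
    obtain ⟨e, he, heN⟩ := hns
    rw [hN j] at heN
    have : ¬ (e ∉ {e | ∃ i ℓ, j ∈ F ℓ ∧ e = s(st i, p i ℓ)}) := fun h => heN ⟨hgood e he, h⟩
    rw [not_not] at this
    obtain ⟨i', ℓ', hjF, hee⟩ := this
    -- e = s(st i', p i' ℓ'), and also e = s(st (I e he), p _ (L e he))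
    have huniq := key _ _ _ _ ((hIL e he).symm.trans hee)
    -- so I e he = i', L e he = ℓ'
    set i₀ := f ⟨e, he⟩ with hi₀
    have hge : g i₀ = ⟨e, he⟩ := hfinj (Function.surjInv_eq hfbij.2 i₀)
    refine ⟨i₀, ?_⟩
    rw [hge]
    simpa [← huniq.2] using hjF
end

section
/- Let n, m, k ≥ 1 and let F_1, …, F_m ⊆ {1,…,n}. Let V consist of pairwise distinct vertices s_1, …, s_{k+1} and p_{j,ℓ} for j ∈ {1,…,k}, ℓ ∈ {1,…,m}. Let E_1 = {{s_j, p_{j,ℓ}} : j ∈ {1,…,k}, ℓ ∈ {1,…,m}} ∪ {{p_{j,ℓ}, s_{j+1}} : j ∈ {1,…,k}, ℓ ∈ {1,…,m}}, and for each i ∈ {1,…,n} let N_i be the set of all unordered pairs of distinct vertices of V except the pairs {v, p_{j,ℓ}} with v ∈ V, j ∈ {1,…,k} and i ∈ F_ℓ. If there exists a map α : {1,…,k} → {1,…,m} with ⋃_{j=1}^{k} F_{α(j)} = {1,…,n}, then the set Q = {{s_j, p_{j,α(j)}} : j ∈ {1,…,k}} ∪ {{p_{j,α(j)}, s_{j+1}}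 : j ∈ {1,…,k}} consists of exactly 2k pairs, forms a path in (V, E_1), and, for every i ∈ {1,…,n}, does not form a path in (V, N_i). -/
/-- `Q` forms a path: there exist `r ≥ 1` and pairwise distinct vertices
`w 0, …, w r` such that `Q` is exactly the set of pairs of consecutive vertices. -/
def FormsPath {α : Type*} (Q : Set (Sym2 α)) : Prop :=
  ∃ r : ℕ, 1 ≤ r ∧ ∃ w : Fin (r + 1) → α, Function.Injective w ∧
    Q = {e | ∃ i : Fin r, e = s(w i.castSucc, w i.succ)}

/-- `Q` forms a path in the graph with edge set `E`: it forms a path and `Q ⊆ E`. -/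
def FormsPathIn {α : Type*} (E Q : Set (Sym2 α)) : Prop :=
  FormsPath Q ∧ Q ⊆ E

theorem stmt5 {α : Type*} (n m k : ℕ) (hn : 1 ≤ n) (hm : 1 ≤ m) (hk : 1 ≤ k)
    (F : Fin m → Set (Fin n))
    (st : Fin (k + 1) → α) (p : Fin k → Fin m → α)
    (hst : Function.Injective st)
    (hp : ∀ j ℓ j' ℓ', p j ℓ = p j' ℓ' → j = j' ∧ ℓ = ℓ')
    (hsp : ∀ i j ℓ, st i ≠ p j ℓ)
    (V : Set α) (hV : V = Set.range st ∪ {v | ∃ j ℓ, v = p j ℓ})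
    (E₁ : Set (Sym2 α))
    (hE₁ : E₁ = {e | ∃ (j : Fin k) (ℓ : Fin m), e = s(st j.castSucc, p j ℓ)} ∪
      {e | ∃ (j : Fin k) (ℓ : Fin m), e = s(p j ℓ, st j.succ)})
    (N : Fin n → Set (Sym2 α))
    (hN : ∀ i, N i = {e | ¬ e.IsDiag ∧ ∀ v ∈ e, v ∈ V} \
      {e | ∃ (j : Fin k) (ℓ : Fin m), i ∈ F ℓ ∧ ∃ v ∈ V, e = s(v, p j ℓ)})
    (a : Fin k → Fin m) (ha : (⋃ j, F (a j)) = Set.univ)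
    (Q : Set (Sym2 α))
    (hQ : Q = {e | ∃ j : Fin k, e = s(st j.castSucc, p j (a j))} ∪
      {e | ∃ j : Fin k, e = s(p j (a j), st j.succ)}) :
    Q.ncard = 2 * k ∧ FormsPathIn E₁ Q ∧ ∀ i : Fin n, ¬ FormsPathIn (N i) Q := by
  -- the walk
  set w : Fin (2*k+1) → α := fun t =>
    if h : t.val % 2 = 0 then st ⟨t.val/2, by have := t.isLt; omega⟩
    else p ⟨t.val/2, by have := t.isLt; omega⟩ (a ⟨t.val/2, by have := t.isLt; omega⟩)
    with hw
  have hwe : ∀ (t : Fin (2*k+1)) (j : Fin (k+1)), t.val = 2*j.val → w t = st j := by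
    intro t j ht
    simp only [hw]
    rw [dif_pos (by omega)]
    congr 1
    exact Fin.ext (by simp; omega)
  have hwo : ∀ (t : Fin (2*k+1)) (j : Fin k), t.val = 2*j.val+1 → w t = p j (a j) := by
    intro t j ht
    simp only [hw]
    rw [dif_neg (by omega)]
    have : (⟨t.val/2, by have := t.isLt; omega⟩ : Fin k) = j := Fin.ext (by simp; omega)
    rw [this]
  have hwinj : Function.Injective w := by
    intro t t' h
    simp only [hw] at h
    by_cases h1 : t.val % 2 = 0 <;> by_cases h2 : t'.val % 2 = 0
    · rw [dif_pos h1, dif_pos h2] at h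
      have := hst h
      have : t.val / 2 = t'.val / 2 := congrArg Fin.val this
      exact Fin.ext (by omega)
    · rw [dif_pos h1, dif_neg h2] at h
      exact absurd h (hsp _ _ _)
    · rw [dif_neg h1, dif_pos h2] at h
      exact absurd h.symm (hsp _ _ _)
    · rw [dif_neg h1, dif_neg h2] at h
      have := (hp _ _ _ _ h).1
      have : t.val / 2 = t'.val / 2 := congrArg Fin.val this
      exact Fin.ext (by omega)
  -- Q as consecutive pairs of w
  have hQw : Q = {e | ∃ i : Fin (2*k), e = s(w i.castSucc, w i.succ)} := by
    rw [hQ]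
    ext e
    constructor
    · rintro (⟨j, rfl⟩ | ⟨j, rfl⟩)
      · refine ⟨⟨2*j.val, by omega⟩, ?_⟩
        rw [hwe _ j.castSucc (by simp), hwo _ j (by simp)]
      · refine ⟨⟨2*j.val+1, by omega⟩, ?_⟩
        rw [hwo _ j (by simp), hwe _ j.succ (by simp; omega)]
    · rintro ⟨i, rfl⟩
      by_cases hpar : i.val % 2 = 0
      · left
        refine ⟨⟨i.val/2, by have := i.isLt; omega⟩, ?_⟩
        rw [hwe _ (⟨i.val/2, by have := i.isLt; omega⟩ : Fin k).castSucc (by simp; omega),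
          hwo _ ⟨i.val/2, by have := i.isLt; omega⟩ (by simp; omega)]
      · right
        refine ⟨⟨i.val/2, by have := i.isLt; omega⟩, ?_⟩
        rw [hwo _ ⟨i.val/2, by have := i.isLt; omega⟩ (by simp; omega),
          hwe _ (⟨i.val/2, by have := i.isLt; omega⟩ : Fin k).succ (by simp; omega)]
  -- cardinality
  have hcard : Q.ncard = 2 * k := by
    have hfinj : Function.Injective (fun i : Fin (2*k) => s(w i.castSucc, w i.succ)) := by
      intro i i' h
      simp only [Sym2.eq, Sym2.rel_iff', Prod.mk.injEq, Prod.swap_prod_mk] at h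
      rcases h with ⟨h1, h2⟩ | ⟨h1, h2⟩
      · have := congrArg Fin.val (hwinj h1)
        simp at this
        exact Fin.ext this
      · have e1 := congrArg Fin.val (hwinj h1)
        have e2 := congrArg Fin.val (hwinj h2)
        simp at e1 e2
        omega
    have : Q = Set.range (fun i : Fin (2*k) => s(w i.castSucc, w i.succ)) := by
      rw [hQw]; ext e; simp [Set.range, eq_comm]
    rw [this, ← Nat.card_coe_set_eq, Nat.card_range_of_injective hfinj]
    simp
  refine ⟨hcard, ⟨⟨2*k, by omega, w, hwinj, hQw⟩, ?_⟩, ?_⟩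
  · -- Q ⊆ E₁
    rw [hQ, hE₁]
    rintro e (⟨j, rfl⟩ | ⟨j, rfl⟩)
    · exact Or.inl ⟨j, a j, rfl⟩
    · exact Or.inr ⟨j, a j, rfl⟩
  · -- not a path in N i
    intro i ⟨_, hsub⟩
    have : (i : Fin n) ∈ ⋃ j, F (a j) := by rw [ha]; trivial
    obtain ⟨j, hj⟩ := Set.mem_iUnion.mp this
    have hmem : s(st j.castSucc, p j (a j)) ∈ Q := by
      rw [hQ]; exact Or.inl ⟨j, rfl⟩
    have := hsub hmem
    rw [hN i] at this
    exact this.2 ⟨j, a j, hj, st j.castSucc, by rw [hV]; exact Or.inl ⟨j.castSucc, rfl⟩, rfl⟩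
end

section
/- Let n, m, k ≥ 1 and let F_1, …, F_m ⊆ {1,…,n}. Let V consist of pairwise distinct vertices s_1, …, s_{k+1} and p_{j,ℓ} for j ∈ {1,…,k}, ℓ ∈ {1,…,m}. Let E_1 = {{s_j, p_{j,ℓ}} : j ∈ {1,…,k}, ℓ ∈ {1,…,m}} ∪ {{p_{j,ℓ}, s_{j+1}} : j ∈ {1,…,k}, ℓ ∈ {1,…,m}}, and for each i ∈ {1,…,n} let N_i be the set of all unordered pairs of distinct vertices of V except the pairs {v, p_{j,ℓ}} with v ∈ V, j ∈ {1,…,k} and i ∈ F_ℓ. If a set Q of exactly 2k unordered pairs forms a path in (V, E_1) and, for every i ∈ {1,…,n}, does not form a path in (V, N_i), then there exists a set I ⊆ {1,…,m} with |I| ≤ k + 1 such that ⋃_{ℓ ∈ I} F_ℓ = {1,…,n}. -/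
theorem stmt6 {α : Type*} (n m k : ℕ) (hn : 1 ≤ n) (hm : 1 ≤ m) (hk : 1 ≤ k)
    (F : Fin m → Set (Fin n))
    (st : Fin (k + 1) → α) (p : Fin k → Fin m → α)
    (hst : Function.Injective st)
    (hp : ∀ j ℓ j' ℓ', p j ℓ = p j' ℓ' → j = j' ∧ ℓ = ℓ')
    (hsp : ∀ i j ℓ, st i ≠ p j ℓ)
    (V : Set α) (hV : V = Set.range st ∪ {v | ∃ j ℓ, v = p j ℓ})
    (E₁ : Set (Sym2 α))
    (hE₁ : E₁ = {e | ∃ (j : Fin k) (ℓ : Fin m), e = s(st j.castSucc, p j ℓ)} ∪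
      {e | ∃ (j : Fin k) (ℓ : Fin m), e = s(p j ℓ, st j.succ)})
    (N : Fin n → Set (Sym2 α))
    (hN : ∀ i, N i = {e | ¬ e.IsDiag ∧ ∀ v ∈ e, v ∈ V} \
      {e | ∃ (j : Fin k) (ℓ : Fin m), i ∈ F ℓ ∧ ∃ v ∈ V, e = s(v, p j ℓ)})
    (Q : Set (Sym2 α)) (hQcard : Q.ncard = 2 * k)
    (hQpath : FormsPathIn E₁ Q)
    (hQneg : ∀ i : Fin n, ¬ FormsPathIn (N i) Q) :
    ∃ I : Finset (Fin m), I.card ≤ k + 1 ∧ (⋃ ℓ ∈ I, F ℓ) = Set.univ := by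
  classical
  obtain ⟨hQform, hQE⟩ := hQpath
  obtain ⟨r, hr1, w, hwinj, hQw⟩ := hQform
  set isP : α → Prop := fun v => ∃ j ℓ, v = p j ℓ with hisP
  have hstnotP : ∀ a, ¬ isP (st a) := by
    rintro a ⟨j, ℓ, h⟩; exact hsp a j ℓ h
  have hpisP : ∀ j ℓ, isP (p j ℓ) := fun j ℓ => ⟨j, ℓ, rfl⟩
  -- every edge of the path alternates between st-vertices and p-vertices
  have halt : ∀ i : Fin r,
      (isP (w i.castSucc) ∧ ¬ isP (w i.succ)) ∨ (¬ isP (w i.castSucc) ∧ isP (w i.succ)) := by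
    intro i
    have he : s(w i.castSucc, w i.succ) ∈ E₁ := by
      apply hQE; rw [hQw]; exact ⟨i, rfl⟩
    rw [hE₁] at he
    rcases he with ⟨j, ℓ, h⟩ | ⟨j, ℓ, h⟩ <;> rw [Sym2.eq_iff] at h <;>
      rcases h with ⟨h1, h2⟩ | ⟨h1, h2⟩
    · exact Or.inr ⟨by rw [h1]; exact hstnotP _, by rw [h2]; exact hpisP _ _⟩
    · exact Or.inl ⟨by rw [h1]; exact hpisP _ _, by rw [h2]; exact hstnotP _⟩
    · exact Or.inl ⟨by rw [h1]; exact hpisP _ _, by rw [h2]; exact hstnotP _⟩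
    · exact Or.inr ⟨by rw [h1]; exact hstnotP _, by rw [h2]; exact hpisP _ _⟩
  -- parity: all p-vertices sit at indices of a fixed parity c
  obtain ⟨c, hcpar⟩ : ∃ c : ℕ, ∀ jv (h : jv < r + 1), (isP (w ⟨jv, h⟩) ↔ jv % 2 = c) := by
    refine ⟨if isP (w ⟨0, Nat.succ_pos r⟩) then 0 else 1, ?_⟩
    intro jv
    induction jv with
    | zero =>
      intro h
      split_ifs with h0
      · exact iff_of_true h0 rfl
      · exact iff_of_false h0 (by decide)
    | succ jv ih =>
      intro h
      have hjr : jv < r := by omega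
      have halti := halt ⟨jv, hjr⟩
      have hcs : (Fin.castSucc ⟨jv, hjr⟩ : Fin (r + 1)) = ⟨jv, by omega⟩ := rfl
      have hsc : (Fin.succ ⟨jv, hjr⟩ : Fin (r + 1)) = ⟨jv + 1, h⟩ := rfl
      rw [hcs, hsc] at halti
      have ihj := ih (by omega)
      have hc2 : (if isP (w ⟨0, Nat.succ_pos r⟩) then 0 else 1) < 2 := by split_ifs <;> omega
      constructor
      · intro hP
        rcases halti with ⟨h1, h2⟩ | ⟨h1, h2⟩
        · exact absurd hP h2
        · have := ihj.not.mpr -- isP (w ⟨jv,_⟩) false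
          have hnot : ¬ (jv % 2 = _) := fun hh => h1 (ihj.mpr hh)
          omega
      · intro hmod
        rcases halti with ⟨h1, h2⟩ | ⟨h1, h2⟩
        · have := ihj.mp h1
          omega
        · exact h2
  have hpar : ∀ i : Fin (r + 1), isP (w i) → i.val % 2 = c := by
    intro i hi
    exact (hcpar i.val i.isLt).mp (by rwa [Fin.eta])
  -- r = 2 * k
  have hfinj : Function.Injective (fun i : Fin r => s(w i.castSucc, w i.succ)) := by
    intro i j hij
    simp only [Sym2.eq_iff] at hij
    rcases hij with ⟨h1, _⟩ | ⟨h1, h2⟩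
    · exact Fin.castSucc_injective _ (hwinj h1)
    · have e1 := congrArg Fin.val (hwinj h1)
      have e2 := congrArg Fin.val (hwinj h2)
      simp [Fin.val_succ] at e1 e2
      omega
  have hr2 : r = 2 * k := by
    have hQr : Q = Set.range (fun i : Fin r => s(w i.castSucc, w i.succ)) := by
      rw [hQw]; ext e
      simp only [Set.mem_setOf_eq, Set.mem_range]
      constructor
      · rintro ⟨i, rfl⟩; exact ⟨i, rfl⟩
      · rintro ⟨i, rfl⟩; exact ⟨i, rfl⟩
    rw [hQr] at hQcard
    rw [← Set.image_univ, Set.ncard_image_of_injective _ hfinj, Set.ncard_univ,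
      Nat.card_eq_fintype_card, Fintype.card_fin] at hQcard
    omega
  -- the index set
  set I : Finset (Fin m) :=
    Finset.univ.filter (fun ℓ => ∃ (j : Fin k) (i : Fin (r + 1)), w i = p j ℓ) with hI
  have hIcard : I.card ≤ k + 1 := by
    have hmem : ∀ ℓ ∈ I, ∃ i : Fin (r + 1), ∃ j, w i = p j ℓ := by
      intro ℓ hℓ
      rw [hI, Finset.mem_filter] at hℓ
      obtain ⟨_, j, i, hij⟩ := hℓ
      exact ⟨i, j, hij⟩
    choose idx jdx hidx using hmem
    have hbound : ∀ (ℓ : Fin m) (h : ℓ ∈ I), (idx ℓ h).val / 2 < k + 1 := by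
      intro ℓ h
      have := (idx ℓ h).isLt
      omega
    refine Finset.card_le_card_of_injOn
      (fun ℓ => if h : ℓ ∈ I then (⟨(idx ℓ h).val / 2, hbound ℓ h⟩ : Fin (k + 1)) else 0)
      (fun _ _ => Finset.mem_univ _) ?_ |>.trans ?_
    · intro ℓ hℓ ℓ' hℓ' heq
      simp only [Finset.mem_coe] at hℓ hℓ'
      dsimp only at heq
      rw [dif_pos hℓ, dif_pos hℓ'] at heq
      have hq : (idx ℓ hℓ).val / 2 = (idx ℓ' hℓ').val / 2 := congrArg Fin.val heq
      have hp1 : (idx ℓ hℓ).val % 2 = c := hpar _ ⟨jdx ℓ hℓ, ℓ, hidx ℓ hℓ⟩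
      have hp2 : (idx ℓ' hℓ').val % 2 = c := hpar _ ⟨jdx ℓ' hℓ', ℓ', hidx ℓ' hℓ'⟩
      have hvq : (idx ℓ hℓ).val = (idx ℓ' hℓ').val := by omega
      have hiq : idx ℓ hℓ = idx ℓ' hℓ' := Fin.ext hvq
      have : p (jdx ℓ hℓ) ℓ = p (jdx ℓ' hℓ') ℓ' := by
        rw [← hidx ℓ hℓ, ← hidx ℓ' hℓ', hiq]
      exact (hp _ _ _ _ this).2
    · simp
  refine ⟨I, hIcard, ?_⟩
  rw [Set.eq_univ_iff_forall]
  intro x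
  have hFP : FormsPath Q := ⟨r, hr1, w, hwinj, hQw⟩
  have hnsub : ¬ Q ⊆ N x := fun h => hQneg x ⟨hFP, h⟩
  obtain ⟨e, heQ, heN⟩ := Set.not_subset.mp hnsub
  have heE : e ∈ E₁ := hQE heQ
  have h1 : ¬ e.IsDiag ∧ ∀ v ∈ e, v ∈ V := by
    rw [hE₁] at heE
    rcases heE with ⟨j, ℓ, rfl⟩ | ⟨j, ℓ, rfl⟩
    · refine ⟨by simp [Sym2.mk_isDiag_iff]; exact hsp _ _ _, ?_⟩
      intro v hv
      rw [Sym2.mem_iff] at hv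
      rcases hv with rfl | rfl
      · rw [hV]; exact Or.inl ⟨_, rfl⟩
      · rw [hV]; exact Or.inr ⟨j, ℓ, rfl⟩
    · refine ⟨by simp [Sym2.mk_isDiag_iff]; exact fun h => hsp _ _ _ h.symm, ?_⟩
      intro v hv
      rw [Sym2.mem_iff] at hv
      rcases hv with rfl | rfl
      · rw [hV]; exact Or.inr ⟨j, ℓ, rfl⟩
      · rw [hV]; exact Or.inl ⟨_, rfl⟩
  rw [hN x] at heN
  have hex : ∃ j ℓ, x ∈ F ℓ ∧ ∃ v ∈ V, e = s(v, p j ℓ) := by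
    by_contra hc
    exact heN ⟨h1, hc⟩
  obtain ⟨j, ℓ, hxF, v, hv, hev⟩ := hex
  have hwi : ∃ i : Fin (r + 1), w i = p j ℓ := by
    rw [hQw] at heQ
    obtain ⟨i, hi⟩ := heQ
    rw [hev, Sym2.eq_iff] at hi
    rcases hi with ⟨_, h2⟩ | ⟨_, h2⟩
    · exact ⟨i.succ, h2.symm⟩
    · exact ⟨i.castSucc, h2.symm⟩
  have hℓI : ℓ ∈ I := by
    rw [hI, Finset.mem_filter]
    obtain ⟨i, hi⟩ := hwi
    exact ⟨Finset.mem_univ _, j, i, hi⟩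
  exact Set.mem_biUnion hℓI hxF
end

section
/- Let n, m, k ≥ 1 and let F_1, …, F_m ⊆ {1,…,n}. Let V consist of 2m pairwise distinct vertices a_1, b_1, …, a_m, b_m, and for each j ∈ {1,…,n} let E_j = {{a_i, b_i} : i ∈ {1,…,m}, j ∈ F_i}. Then there exists a set I ⊆ {1,…,m} with |I| ≤ k and ⋃_{i ∈ I} F_i = {1,…,n} if and only if there exists a set H ⊆ V with |H| ≤ 2k such that, for every j ∈ {1,…,n}, H is not independent in (V, E_j). -/
theorem stmt9 {α : Type*} (n m k : ℕ) (hn : 1 ≤ n) (hm : 1 ≤ m) (hk : 1 ≤ k)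
    (F : Fin m → Set (Fin n))
    (a b : Fin m → α) (ha : Function.Injective a) (hb : Function.Injective b)
    (hab : ∀ i i', a i ≠ b i')
    (V : Set α) (hV : V = Set.range a ∪ Set.range b)
    (E : Fin n → Set (Sym2 α))
    (hE : ∀ j, E j = {e | ∃ i : Fin m, j ∈ F i ∧ e = s(a i, b i)}) :
    (∃ I : Finset (Fin m), I.card ≤ k ∧ (⋃ i ∈ I, F i) = Set.univ) ↔
      (∃ H : Finset α, ↑H ⊆ V ∧ H.card ≤ 2 * k ∧ ∀ j : Fin n, ¬ Indep (E j) ↑H) := by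
  classical
  constructor
  · rintro ⟨I, hIcard, hIcov⟩
    refine ⟨I.image a ∪ I.image b, ?_, ?_, ?_⟩
    · intro x hx
      rw [hV]
      simp only [Finset.coe_union, Set.mem_union, Finset.coe_image,
        Set.mem_image] at hx ⊢
      rcases hx with ⟨i, _, rfl⟩ | ⟨i, _, rfl⟩
      · exact Or.inl ⟨i, rfl⟩
      · exact Or.inr ⟨i, rfl⟩
    · calc (I.image a ∪ I.image b).card ≤ (I.image a).card + (I.image b).card :=
            Finset.card_union_le _ _
        _ ≤ I.card + I.card := by
            gcongr <;> exact Finset.card_image_le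
        _ ≤ 2 * k := by omega
    · intro j hind
      have : (j : Fin n) ∈ ⋃ i ∈ I, F i := by rw [hIcov]; trivial
      simp only [Set.mem_iUnion] at this
      obtain ⟨i, hiI, hji⟩ := this
      refine hind (a i) (b i) ?_ ⟨?_, ?_⟩
      · rw [hE]; exact ⟨i, hji, rfl⟩
      · simp only [Finset.coe_union, Set.mem_union, Finset.coe_image, Set.mem_image]
        exact Or.inl ⟨i, hiI, rfl⟩
      · simp only [Finset.coe_union, Set.mem_union, Finset.coe_image, Set.mem_image]
        exact Or.inr ⟨i, hiI, rfl⟩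
  · rintro ⟨H, hHV, hHcard, hHind⟩
    refine ⟨Finset.univ.filter (fun i => a i ∈ H ∧ b i ∈ H), ?_, ?_⟩
    · set I := Finset.univ.filter (fun i => a i ∈ H ∧ b i ∈ H) with hI
      have hsub : I.image a ∪ I.image b ⊆ H := by
        intro x hx
        simp only [Finset.mem_union, Finset.mem_image, hI, Finset.mem_filter] at hx
        rcases hx with ⟨i, ⟨_, h1, h2⟩, rfl⟩ | ⟨i, ⟨_, h1, h2⟩, rfl⟩ <;> assumption
      have hdisj : Disjoint (I.image a) (I.image b) := by
        rw [Finset.disjoint_left]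
        rintro x hxa hxb
        simp only [Finset.mem_image] at hxa hxb
        obtain ⟨i, _, rfl⟩ := hxa
        obtain ⟨i', _, h⟩ := hxb
        exact hab i i' h.symm
      have h2 : (I.image a ∪ I.image b).card = I.card + I.card := by
        rw [Finset.card_union_of_disjoint hdisj,
          Finset.card_image_of_injective _ ha, Finset.card_image_of_injective _ hb]
      have := Finset.card_le_card hsub
      omega
    · ext j
      simp only [Set.mem_iUnion, Set.mem_univ, iff_true]
      have := hHind j
      unfold Indep at this
      push_neg at this
      obtain ⟨u, v, huv, hu, hv⟩ := this
      rw [hE] at huv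
      obtain ⟨i, hji, heq⟩ := huv
      rw [Sym2.eq_iff] at heq
      have hai : a i ∈ H ∧ b i ∈ H := by
        rcases heq with ⟨rfl, rfl⟩ | ⟨rfl, rfl⟩
        · exact ⟨by simpa using hu, by simpa using hv⟩
        · exact ⟨by simpa using hv, by simpa using hu⟩
      exact ⟨i, by simp [Finset.mem_filter, hai.1, hai.2], hji⟩
end

section
/- Let V be a finite vertex set, E a set of unordered pairs of distinct elements of V, c : V → N a coloring of the vertices, and E_1, …, E_q further sets of unordered pairs of distinct elements of V (the negative samples). For an unordered pair e, let β(e) = {i ∈ {1,…,q} : e ∉ E_i}. For a finite set of colors C and a set I ⊆ {1,…,q}, say that Good(C, I) holds if there exists a matching M in (V, E) such that c is injective on the set of endpoints of the pairs in M, the image of this set of endpoints under c is exactly C, and ⋃_{e ∈ M} β(e) = I. Then for every nonempty C and every I ⊆ {1,…,q}: Good(C, I) holds if and only if there exist a pair {u, v} ∈ E with c(u) ≠ c(v), c(u) ∈ C and c(v) ∈ C, and a set I' ⊆ I with I' ∪ β({u, v}) = I, such that Good(C \ {c(u), c(v)}, I') holds. -/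
/-- The set of endpoints of the pairs in `M`. -/
def Endpoints {α : Type*} (M : Set (Sym2 α)) : Set α :=
  {v | ∃ e ∈ M, v ∈ e}

theorem stmt10 {α : Type*} [Fintype α] (q : ℕ)
    (E : Set (Sym2 α)) (hE : ∀ e ∈ E, ¬ e.IsDiag)
    (c : α → ℕ)
    (Es : Fin q → Set (Sym2 α))
    (β : Sym2 α → Set (Fin q)) (hβ : ∀ e, β e = {i | e ∉ Es i})
    (Good : Set ℕ → Set (Fin q) → Prop)
    (hGood : ∀ C I, Good C I ↔ ∃ M : Set (Sym2 α), IsMatchingIn E M ∧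
        Set.InjOn c (Endpoints M) ∧ c '' Endpoints M = C ∧ (⋃ e ∈ M, β e) = I)
    (C : Set ℕ) (hCfin : C.Finite) (hC : C.Nonempty) (I : Set (Fin q)) :
    Good C I ↔ ∃ u v : α, s(u, v) ∈ E ∧ c u ≠ c v ∧ c u ∈ C ∧ c v ∈ C ∧
      ∃ I' ⊆ I, I' ∪ β (s(u, v)) = I ∧ Good (C \ {c u, c v}) I' := by
  constructor
  · intro h
    rw [hGood] at h
    obtain ⟨M, hM, hinj, himg, hunion⟩ := h
    obtain ⟨x, hx⟩ := hC
    rw [← himg] at hx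
    obtain ⟨w, hw, rfl⟩ := hx
    obtain ⟨e, heM, hwe⟩ := hw
    obtain ⟨u, v, rfl⟩ : ∃ u v, e = s(u, v) := by
      induction e using Sym2.ind with | _ u v => exact ⟨u, v, rfl⟩
    have huv : u ≠ v := by
      intro h; exact hE _ (hM.1 heM) (by simp [h, Sym2.mk_isDiag_iff])
    have hu : u ∈ Endpoints M := ⟨s(u, v), heM, by simp⟩
    have hv : v ∈ Endpoints M := ⟨s(u, v), heM, by simp⟩
    have hcuv : c u ≠ c v := fun h => huv (hinj hu hv h)
    have hcu : c u ∈ C := himg ▸ ⟨u, hu, rfl⟩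
    have hcv : c v ∈ C := himg ▸ ⟨v, hv, rfl⟩
    refine ⟨u, v, hM.1 heM, hcuv, hcu, hcv, ⋃ e ∈ M \ {s(u, v)}, β e, ?_, ?_, ?_⟩
    · rw [← hunion]
      exact Set.biUnion_subset_biUnion_left (Set.diff_subset)
    · rw [← hunion, Set.union_comm]
      have : M = insert (s(u, v)) (M \ {s(u, v)}) := by
        rw [Set.insert_diff_singleton, Set.insert_eq_of_mem heM]
      conv_rhs => rw [this]
      rw [Set.biUnion_insert]
    · rw [hGood]
      refine ⟨M \ {s(u, v)}, ⟨fun e he => hM.1 he.1, fun e₁ h₁ e₂ h₂ hne =>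
        hM.2 e₁ h₁.1 e₂ h₂.1 hne⟩, ?_, ?_, rfl⟩
      · have hEsub : Endpoints (M \ {s(u, v)}) ⊆ Endpoints M :=
          fun x ⟨e, he, hxe⟩ => ⟨e, he.1, hxe⟩
        exact hinj.mono hEsub
      · have hEnd : Endpoints (M \ {s(u, v)}) = Endpoints M \ {u, v} := by
          ext x
          constructor
          · rintro ⟨e', he', hxe⟩
            refine ⟨⟨e', he'.1, hxe⟩, ?_⟩
            intro hx
            simp only [Set.mem_insert_iff, Set.mem_singleton_iff] at hx
            have hxuv : x ∈ s(u, v) := by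
              rcases hx with rfl | rfl <;> simp
            exact hM.2 (s(u, v)) heM e' he'.1 (Ne.symm he'.2) x hxuv hxe
          · rintro ⟨⟨e', he', hxe⟩, hx⟩
            refine ⟨e', ⟨he', ?_⟩, hxe⟩
            rintro rfl
            rcases Sym2.mem_iff.1 hxe with rfl | rfl
            · exact hx (Or.inl rfl)
            · exact hx (Or.inr rfl)
        rw [hEnd, ← himg]
        ext x
        constructor
        · rintro ⟨w, ⟨hw, hwuv⟩, rfl⟩
          refine ⟨⟨w, hw, rfl⟩, ?_⟩
          rintro (h | h)
          · exact hwuv (Or.inl (hinj hw hu h))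
          · exact hwuv (Or.inr (hinj hw hv h))
        · rintro ⟨⟨w, hw, rfl⟩, hx⟩
          refine ⟨w, ⟨hw, ?_⟩, rfl⟩
          rintro (rfl | rfl)
          · exact hx (Or.inl rfl)
          · exact hx (Or.inr rfl)
  · rintro ⟨u, v, heE, hcuv, hcu, hcv, I', hI'I, hI'β, hG⟩
    rw [hGood] at hG ⊢
    obtain ⟨M', hM', hinj', himg', hunion'⟩ := hG
    have huM' : u ∉ Endpoints M' := by
      intro hu
      have : c u ∈ C \ {c u, c v} := himg' ▸ ⟨u, hu, rfl⟩
      exact this.2 (Or.inl rfl)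
    have hvM' : v ∉ Endpoints M' := by
      intro hv
      have : c v ∈ C \ {c u, c v} := himg' ▸ ⟨v, hv, rfl⟩
      exact this.2 (Or.inr rfl)
    have heM' : s(u, v) ∉ M' := fun h => huM' ⟨s(u, v), h, by simp⟩
    have hEnd : Endpoints (insert (s(u, v)) M') = insert u (insert v (Endpoints M')) := by
      ext x
      constructor
      · rintro ⟨e, (rfl | he), hxe⟩
        · rcases Sym2.mem_iff.1 hxe with h | h
          · exact Or.inl h
          · exact Or.inr (Or.inl h)
        · exact Or.inr (Or.inr ⟨e, he, hxe⟩)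
      · rintro (h | h | ⟨e, he, hxe⟩)
        · exact ⟨s(u, v), Or.inl rfl, by simp [h]⟩
        · exact ⟨s(u, v), Or.inl rfl, by simp [h]⟩
        · exact ⟨e, Or.inr he, hxe⟩
    refine ⟨insert (s(u, v)) M', ⟨?_, ?_⟩, ?_, ?_, ?_⟩
    · rintro e (rfl | he)
      · exact heE
      · exact hM'.1 he
    · rintro e₁ (rfl | h₁) e₂ (rfl | h₂) hne x hx₁ hx₂
      · exact hne rfl
      · rcases Sym2.mem_iff.1 hx₁ with rfl | rfl
        · exact huM' ⟨e₂, h₂, hx₂⟩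
        · exact hvM' ⟨e₂, h₂, hx₂⟩
      · rcases Sym2.mem_iff.1 hx₂ with rfl | rfl
        · exact huM' ⟨e₁, h₁, hx₁⟩
        · exact hvM' ⟨e₁, h₁, hx₁⟩
      · exact hM'.2 e₁ h₁ e₂ h₂ hne x hx₁ hx₂
    · rw [hEnd]
      rintro x (rfl | hx) y (rfl | hy) hxy
      · rfl
      · rcases hy with rfl | hy
        · exact absurd hxy hcuv
        · exact absurd (himg' ▸ ⟨y, hy, hxy.symm⟩ : c x ∈ C \ {c x, c v})
            (fun h => h.2 (Or.inl rfl))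
      · rcases hx with rfl | hx
        · exact absurd hxy.symm hcuv
        · exact absurd (himg' ▸ ⟨x, hx, hxy⟩ : c y ∈ C \ {c y, c v})
            (fun h => h.2 (Or.inl rfl))
      · rcases hx with rfl | hx
        · rcases hy with rfl | hy
          · rfl
          · exact absurd (himg' ▸ ⟨y, hy, hxy.symm⟩ : c x ∈ C \ {c u, c x})
              (fun h => h.2 (Or.inr rfl))
        · rcases hy with rfl | hy
          · exact absurd (himg' ▸ ⟨x, hx, hxy⟩ : c y ∈ C \ {c u, c y})
              (fun h => h.2 (Or.inr rfl))
          · exact hinj' hx hy hxy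
    · rw [hEnd, Set.image_insert_eq, Set.image_insert_eq, himg']
      ext x
      simp only [Set.mem_insert_iff, Set.mem_diff, Set.mem_singleton_iff]
      constructor
      · rintro (rfl | rfl | ⟨hx, _⟩)
        · exact hcu
        · exact hcv
        · exact hx
      · intro hx
        by_cases h1 : x = c u
        · exact Or.inl h1
        by_cases h2 : x = c v
        · exact Or.inr (Or.inl h2)
        · exact Or.inr (Or.inr ⟨hx, fun h => by
            rcases h with h | h
            · exact h1 h
            · exact h2 h⟩)
    · rw [Set.biUnion_insert, hunion', Set.union_comm, hI'β]
end

section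
/- Let V be a finite vertex set, E a set of unordered pairs of distinct elements of V, c : V → N a coloring of the vertices, and E_1, …, E_q further sets of unordered pairs of distinct elements of V (the negative samples). For an unordered pair e, let β(e) = {i ∈ {1,…,q} : e ∉ E_i}. For a vertex v ∈ V, a finite set of colors C, and a set I ⊆ {1,…,q}, say that Good(v, C, I) holds if there exist pairwise distinct vertices w_0, …, w_r (r ≥ 0) with w_r = v and {w_{s−1}, w_s} ∈ E for all 1 ≤ s ≤ r, such that c is injective on {w_0, …, w_r}, the image of {w_0, …, w_r} under c is exactly C, and ⋃_{s=1}^{r} β({w_{s−1}, w_s}) = I. Then for every v ∈ V, every C with c(v) ∈ C and |C| ≥ 2, and every I ⊆ {1,…,q}: Good(v, C, I) holds if and only if there exist a vertex u with {u, v} ∈ E and c(u) ∈ C \ {c(v)}, and a set I' ⊆ I with I' ∪ β({u, v}) = I, such that Good(u, C \ {c(v)}, I') holds. -/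
/-!
A colorful path ending at `v` that uses at least two colors has at least one edge, so it is a
colorful path ending at its second-to-last vertex `u`, extended by the edge `uv`. Since colors
along the path are distinct, dropping `v` removes exactly the color `c v`, and the labels of the
path are those of the shorter path together with those of the last edge.
-/

open Function Set

theorem Function.injective_comp_iff_injective_and_injOn {ι α κ : Type*} {f : ι → α}
    {g : α → κ} : Injective (g ∘ f) ↔ Injective f ∧ InjOn g (range f) :=
  ⟨fun h => ⟨h.of_comp, h.injOn_range⟩, fun ⟨hf, hg⟩ => (hg.injective_iff _ subset_rfl).2 hf⟩

section ColorfulPath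

variable {α κ γ : Type*} {E : Set (Sym2 α)} {c : α → κ} {r : ℕ} {C : Set κ}

def IsColorfulPath (E : Set (Sym2 α)) (c : α → κ) {r : ℕ} (w : Fin (r + 1) → α)
    (C : Set κ) : Prop :=
  (∀ i : Fin r, s(w i.castSucc, w i.succ) ∈ E) ∧ Injective (c ∘ w) ∧ c '' range w = C

def pathLabels (β : Sym2 α → Set γ) {r : ℕ} (w : Fin (r + 1) → α) : Set γ :=
  ⋃ i : Fin r, β s(w i.castSucc, w i.succ)

theorem IsColorfulPath.ncard_eq {w : Fin (r + 1) → α} (hw : IsColorfulPath E c w C) :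
    C.ncard = r + 1 := by
  rw [← hw.2.2, ← range_comp, ncard_range_of_injective hw.2.1, Nat.card_eq_fintype_card,
    Fintype.card_fin]

theorem isColorfulPath_snoc_iff {w : Fin (r + 1) → α} {v : α} :
    IsColorfulPath E c (Fin.snoc w v) C ↔
      c v ∈ C ∧ s(w (Fin.last r), v) ∈ E ∧ IsColorfulPath E c w (C \ {c v}) := by
  simp only [IsColorfulPath, Fin.forall_fin_succ', Fin.comp_snoc, Fin.snoc_injective_iff,
    Fin.range_snoc, image_insert_eq, Fin.snoc_castSucc, Fin.succ_castSucc, Fin.succ_last,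
    Fin.snoc_last, range_comp]
  constructor
  · rintro ⟨⟨hE, hlast⟩, ⟨hinj, hv⟩, rfl⟩
    exact ⟨mem_insert _ _, hlast, hE, hinj, (insert_sdiff_self_of_notMem hv).symm⟩
  · rintro ⟨hvC, hlast, hE, hinj, himage⟩
    refine ⟨⟨hE, hlast⟩, ⟨hinj, ?_⟩, ?_⟩
    · rw [himage]
      exact fun h => h.2 rfl
    · rw [himage, insert_sdiff_singleton, insert_eq_of_mem hvC]

theorem pathLabels_snoc (β : Sym2 α → Set γ) (w : Fin (r + 1) → α) (v : α) :
    pathLabels β (Fin.snoc w v) = pathLabels β w ∪ β s(w (Fin.last r), v) := by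
  simp [pathLabels, iUnion_fin_add_one_eq_iUnion_castSucc, comp_def, Fin.succ_castSucc, -Fin.castSucc_succ]

end ColorfulPath

theorem stmt11_general {α : Type*} (q : ℕ)
    (E : Set (Sym2 α))
    (c : α → ℕ)
    (β : Sym2 α → Set (Fin q))
    (Good : α → Set ℕ → Set (Fin q) → Prop)
    (hGood : ∀ v C I, Good v C I ↔ ∃ (r : ℕ) (w : Fin (r + 1) → α),
        Function.Injective w ∧ w (Fin.last r) = v ∧
        (∀ i : Fin r, s(w i.castSucc, w i.succ) ∈ E) ∧
        Set.InjOn c (Set.range w) ∧ c '' Set.range w = C ∧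
        (⋃ i : Fin r, β (s(w i.castSucc, w i.succ))) = I)
    (v : α) (C : Set ℕ) (hvC : c v ∈ C) (hC2 : 2 ≤ C.ncard)
    (I : Set (Fin q)) :
    Good v C I ↔ ∃ u : α, s(u, v) ∈ E ∧ c u ∈ C \ {c v} ∧
      ∃ I' ⊆ I, I' ∪ β (s(u, v)) = I ∧ Good u (C \ {c v}) I' := by
  have good_iff : ∀ v C I, Good v C I ↔ ∃ (r : ℕ) (w : Fin (r + 1) → α),
      w (Fin.last r) = v ∧ IsColorfulPath E c w C ∧ pathLabels β w = I := by
    intro v C I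
    simp only [hGood, IsColorfulPath, pathLabels, injective_comp_iff_injective_and_injOn]
    tauto
  simp only [good_iff]
  constructor
  · rintro ⟨r, w, hwv, hw, hwI⟩
    obtain ⟨r, rfl⟩ : ∃ r', r = r' + 1 := Nat.exists_eq_add_one.2 (by have := hw.ncard_eq; omega)
    obtain ⟨w, v', rfl⟩ : ∃ w' v', w = Fin.snoc w' v' := ⟨_, _, (Fin.snoc_init_self w).symm⟩
    obtain rfl : v' = v := by simpa using hwv
    obtain ⟨-, hedge, hw⟩ := isColorfulPath_snoc_iff.1 hw
    rw [pathLabels_snoc] at hwI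
    refine ⟨w (Fin.last r), hedge, ?_, pathLabels β w, hwI ▸ subset_union_left, hwI,
      r, w, rfl, hw, rfl⟩
    rw [← hw.2.2]
    exact mem_image_of_mem c (mem_range_self _)
  · rintro ⟨u, hedge, -, I', -, hI, r, w, rfl, hw, rfl⟩
    exact ⟨r + 1, Fin.snoc w v, Fin.snoc_last .., isColorfulPath_snoc_iff.2 ⟨hvC, hedge, hw⟩,
      by rw [pathLabels_snoc, hI]⟩

theorem stmt11 {α : Type*} [Fintype α] (q : ℕ)
    (E : Set (Sym2 α))
    (c : α → ℕ)
    (Es : Fin q → Set (Sym2 α))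
    (β : Sym2 α → Set (Fin q)) (hβ : ∀ e, β e = {i | e ∉ Es i})
    (Good : α → Set ℕ → Set (Fin q) → Prop)
    (hGood : ∀ v C I, Good v C I ↔ ∃ (r : ℕ) (w : Fin (r + 1) → α),
        Function.Injective w ∧ w (Fin.last r) = v ∧
        (∀ i : Fin r, s(w i.castSucc, w i.succ) ∈ E) ∧
        Set.InjOn c (Set.range w) ∧ c '' Set.range w = C ∧
        (⋃ i : Fin r, β (s(w i.castSucc, w i.succ))) = I)
    (v : α) (C : Set ℕ) (hCfin : C.Finite) (hvC : c v ∈ C) (hC2 : 2 ≤ C.ncard)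
    (I : Set (Fin q)) :
    Good v C I ↔ ∃ u : α, s(u, v) ∈ E ∧ c u ∈ C \ {c v} ∧
      ∃ I' ⊆ I, I' ∪ β (s(u, v)) = I ∧ Good u (C \ {c v}) I' :=
  stmt11_general q E c β Good hGood v C hvC hC2 I
end
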